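/- arXiv:alg-geom/9711024 — 4 statements merged into one kernel-verified Lean document; each statement's English description precedes it below -/
import Mathlib

section
/- Let n be a positive natural number and set r = (n-1)/n. Then for every positive natural number m, one has ⌊(m+1)·r⌋/m ≥ r. -/
theorem stmt_0 (n m : ℕ) (hn : 0 < n) (hm : 0 < m) (r : ℚ)
    (hr : r = ((n : ℚ) - 1) / n) :
    (⌊((m : ℚ) + 1) * r⌋ : ℚ) / m ≥ r := by
  have hnq : (0 : ℚ) < n := by positivity
  have hm0 : (0 : ℚ) < m := by exact_mod_cast hm
  set k : ℤ := ⌊((m : ℚ) + 1) * r⌋ with hk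
  have hlt : ((m : ℚ) + 1) * r - 1 < k := Int.sub_one_lt_floor _
  have hrn : (n : ℚ) * r = (n : ℚ) - 1 := by rw [hr]; field_simp
  have h2 : ((m : ℚ) * ((n : ℚ) - 1) - 1 : ℚ) < n * k := by nlinarith
  have hkey : (m : ℤ) * ((n : ℤ) - 1) ≤ (n : ℤ) * k := by
    have h3 : ((m : ℤ) * ((n : ℤ) - 1) : ℚ) - 1 < (((n : ℤ) * k : ℤ) : ℚ) := by
      push_cast; linarith
    have h4 : (m : ℤ) * ((n : ℤ) - 1) - 1 < (n : ℤ) * k := by exact_mod_cast h3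
    omega
  have hkeyq : (m : ℚ) * ((n : ℚ) - 1) ≤ (n : ℚ) * k := by exact_mod_cast hkey
  rw [ge_iff_le, le_div_iff₀ hm0, hr, div_mul_eq_mul_div, div_le_iff₀ hnq]
  nlinarith
end

section
/- Let r be a rational number with r < 1, let n be a positive natural number such that n·r is an integer, and let m be a positive natural number divisible by n. Then ⌊(m+1)·r⌋/m ≤ r, and equality holds if and only if r ≥ 0. -/
theorem stmt_4 (r : ℚ) (hr : r < 1) (n : ℕ) (hn : 0 < n)
    (hint : ∃ k : ℤ, (n : ℚ) * r = k) (m : ℕ) (hm : 0 < m) (hdvd : n ∣ m) :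
    (⌊((m : ℚ) + 1) * r⌋ : ℚ) / m ≤ r ∧
      ((⌊((m : ℚ) + 1) * r⌋ : ℚ) / m = r ↔ 0 ≤ r) := by
  obtain ⟨k, hk⟩ := hint
  obtain ⟨c, rfl⟩ := hdvd
  have hmr : ((n * c : ℕ) : ℚ) * r = ((c * k : ℤ) : ℚ) := by
    push_cast
    rw [show (n:ℚ) * (c:ℚ) * r = (c:ℚ) * ((n:ℚ) * r) by ring, hk]
  have hfloor : ⌊((n * c : ℕ) + 1 : ℚ) * r⌋ = ⌊r⌋ + c * k := by
    rw [add_mul, one_mul, hmr, add_comm, Int.floor_add_intCast]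
  have hm' : (0 : ℚ) < (n * c : ℕ) := by exact_mod_cast hm
  have key : (⌊((n * c : ℕ) + 1 : ℚ) * r⌋ : ℚ) / (n * c : ℕ)
      = (⌊r⌋ : ℚ) / (n * c : ℕ) + r := by
    rw [hfloor, Int.cast_add, add_div]
    congr 1
    rw [← hmr, mul_div_cancel_left₀ _ (ne_of_gt hm')]
  constructor
  · rw [key]
    have h0 : (⌊r⌋ : ℚ) ≤ 0 := by
      have h1 : (⌊r⌋ : ℚ) < 1 := (Int.floor_le r).trans_lt hr
      have : ⌊r⌋ ≤ 0 := by
        have : ⌊r⌋ < 1 := by exact_mod_cast h1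
        omega
      exact_mod_cast this
    nlinarith [div_nonpos_of_nonpos_of_nonneg h0 hm'.le]
  · rw [key]
    constructor
    · intro h
      have h1 : (⌊r⌋ : ℚ) / (n * c : ℕ) = 0 := by linarith
      have h2 : (⌊r⌋ : ℚ) = 0 := by
        rcases div_eq_zero_iff.mp h1 with h | h
        · exact h
        · exact absurd h (ne_of_gt hm')
      have h3 : ⌊r⌋ = 0 := by exact_mod_cast h2
      exact (Int.floor_eq_zero_iff.mp h3).1
    · intro h
      have h3 : ⌊r⌋ = 0 := Int.floor_eq_zero_iff.mpr ⟨h, hr⟩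
      rw [h3]; simp
end

section
/- Let n be a positive natural number and let b₁, …, b_k be real numbers with 0 < bᵢ < 1 for all i. Then the conjunction of (i) ∑ᵢ bᵢ ≤ 1 and (ii) ∑ᵢ ⌊(n+1)·bᵢ⌋/n > 1 holds if and only if the conjunction of (iii) (n+1)·bᵢ is an integer for every i and (iv) ∑ᵢ bᵢ = 1 holds. -/
theorem stmt_7 (n : ℕ) (hn : 0 < n) (k : ℕ) (b : Fin k → ℝ)
    (hb : ∀ i, 0 < b i ∧ b i < 1) :
    ((∑ i, b i ≤ 1) ∧ (∑ i, (⌊((n : ℝ) + 1) * b i⌋ : ℝ) / n > 1)) ↔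
      ((∀ i, ∃ m : ℤ, ((n : ℝ) + 1) * b i = m) ∧ ∑ i, b i = 1) := by
  have hn' : (0:ℝ) < n := by exact_mod_cast hn
  constructor
  · rintro ⟨h1, h2⟩
    rw [← Finset.sum_div] at h2
    have hnS : (n:ℝ) < ∑ i, (⌊((n : ℝ) + 1) * b i⌋ : ℝ) := (one_lt_div hn').mp h2
    have hZ : (n:ℤ) < ∑ i, ⌊((n : ℝ) + 1) * b i⌋ := by exact_mod_cast hnS
    have hZ1 : (n:ℤ) + 1 ≤ ∑ i, ⌊((n : ℝ) + 1) * b i⌋ := hZ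
    have hlb : (n:ℝ) + 1 ≤ ∑ i, (⌊((n : ℝ) + 1) * b i⌋ : ℝ) := by exact_mod_cast hZ1
    have hfl : ∀ i ∈ Finset.univ, (⌊((n : ℝ) + 1) * b i⌋ : ℝ) ≤ ((n : ℝ) + 1) * b i :=
      fun i _ => Int.floor_le _
    have hub : ∑ i, (⌊((n : ℝ) + 1) * b i⌋ : ℝ) ≤ ∑ i, ((n : ℝ) + 1) * b i :=
      Finset.sum_le_sum hfl
    have hsum2 : ∑ i, ((n : ℝ) + 1) * b i = ((n:ℝ) + 1) * ∑ i, b i := by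
      rw [Finset.mul_sum]
    have hub2 : ∑ i, ((n : ℝ) + 1) * b i ≤ (n:ℝ) + 1 := by
      rw [hsum2]
      nlinarith
    have heq : ∑ i, ((n : ℝ) + 1) * b i = (n:ℝ) + 1 := le_antisymm hub2 (le_trans hlb hub)
    have hsumb : ∑ i, b i = 1 := by
      have := heq
      rw [hsum2] at this
      have hne : (n:ℝ) + 1 ≠ 0 := by positivity
      field_simp at this
      linarith
    refine ⟨fun i => ⟨⌊((n : ℝ) + 1) * b i⌋, ?_⟩, hsumb⟩
    have hzero : ∑ i, (((n : ℝ) + 1) * b i - (⌊((n : ℝ) + 1) * b i⌋ : ℝ)) = 0 := by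
      rw [Finset.sum_sub_distrib, heq]
      linarith [le_antisymm (le_trans hub hub2) hlb]
    have := (Finset.sum_eq_zero_iff_of_nonneg
      (fun i _ => by linarith [Int.floor_le (((n : ℝ) + 1) * b i)])).mp hzero i
      (Finset.mem_univ i)
    linarith [this]
  · rintro ⟨hint, hsum⟩
    choose m hm using hint
    have hfl : ∀ i, (⌊((n : ℝ) + 1) * b i⌋ : ℝ) = (m i : ℝ) := by
      intro i; rw [hm i, Int.floor_intCast]
    refine ⟨le_of_eq hsum, ?_⟩
    have : ∑ i, (⌊((n : ℝ) + 1) * b i⌋ : ℝ) / n = ((n:ℝ) + 1) / n := by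
      rw [← Finset.sum_div]
      congr 1
      calc ∑ i, (⌊((n : ℝ) + 1) * b i⌋ : ℝ) = ∑ i, ((n : ℝ) + 1) * b i := by
            refine Finset.sum_congr rfl fun i _ => ?_
            rw [hfl i, ← hm i]
        _ = ((n:ℝ) + 1) * ∑ i, b i := by rw [Finset.mul_sum]
        _ = (n:ℝ) + 1 := by rw [hsum, mul_one]
    rw [this]
    rw [gt_iff_lt, lt_div_iff₀ hn']
    linarith
end

section
/- Let m₁, …, m_k be positive natural numbers such that ∑ᵢ (mᵢ - 1)/mᵢ ≤ 2. Then there exists n ∈ {1, 2, 3, 4, 6} such that ∑ᵢ ⌊(n+1)·(mᵢ-1)/mᵢ⌋ ≤ 2·n. -/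
lemma aux_L : ∀ (c2 : Fin 5) (c3 : Fin 4) (c4 c5 c6 c7 : Fin 3),
    210*c2.val + 280*c3.val + 315*c4.val + 336*c5.val + 350*c6.val + 360*c7.val ≤ 840 →
    (c2.val*1 + c3.val*1 + c4.val*1 + c5.val*1 + c6.val*1 + c7.val*1 ≤ 2 ∨
     c2.val*1 + c3.val*2 + c4.val*2 + c5.val*2 + c6.val*2 + c7.val*2 ≤ 4 ∨
     c2.val*2 + c3.val*2 + c4.val*3 + c5.val*3 + c6.val*3 + c7.val*3 ≤ 6 ∨
     c2.val*2 + c3.val*3 + c4.val*3 + c5.val*4 + c6.val*4 + c7.val*4 ≤ 8 ∨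
     c2.val*3 + c3.val*4 + c4.val*5 + c5.val*5 + c6.val*5 + c7.val*6 ≤ 12) := by decide

-- floor is n when m ≥ n+1
lemma aux_floor_eq (n m : ℕ) (hm : n + 1 ≤ m) :
    ⌊((n : ℚ) + 1) * (((m : ℚ) - 1) / (m : ℚ))⌋ = n := by
  have hm' : 0 < m := by omega
  have hm0 : (0:ℚ) < m := by exact_mod_cast hm'
  have hcast : ((n:ℚ) + 1) ≤ m := by exact_mod_cast hm
  rw [Int.floor_eq_iff]
  push_cast
  constructor
  · rw [← mul_div_assoc, le_div_iff₀ hm0]; nlinarith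
  · rw [← mul_div_assoc, div_lt_iff₀ hm0]; nlinarith

lemma aux_floor_min (n m : ℕ) (hn : n + 1 ≤ 7) (hm : 0 < m) :
    ⌊((n : ℚ) + 1) * (((m : ℚ) - 1) / (m : ℚ))⌋
      = ⌊((n : ℚ) + 1) * (((min m 7 : ℕ) : ℚ) - 1) / ((min m 7 : ℕ) : ℚ)⌋ := by
  rcases le_or_gt m 7 with h | h
  · rw [min_eq_left h, mul_div_assoc]
  · rw [min_eq_right h.le, mul_div_assoc, aux_floor_eq n 7 hn, aux_floor_eq n m (by omega)]

lemma aux_mono (a b : ℕ) (ha : 0 < a) (hab : a ≤ b) :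
    ((a:ℚ) - 1) / a ≤ ((b:ℚ) - 1) / b := by
  have ha0 : (0:ℚ) < a := by exact_mod_cast ha
  have hb0 : (0:ℚ) < b := by exact_mod_cast (lt_of_lt_of_le ha hab)
  rw [div_le_div_iff₀ ha0 hb0]
  have : (a:ℚ) ≤ b := by exact_mod_cast hab
  nlinarith

lemma aux_fiber {k : ℕ} (t : Fin k → ℕ) (ht : ∀ i, t i < 8) {M : Type*} [AddCommMonoid M]
    (g : ℕ → M) :
    ∑ i, g (t i) = ∑ j ∈ Finset.range 8, (Finset.univ.filter fun i => t i = j).card • g j := by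
  rw [← Finset.sum_fiberwise_of_maps_to (fun i _ => Finset.mem_range.mpr (ht i)) fun i => g (t i)]
  refine Finset.sum_congr rfl fun j _ => ?_
  calc ∑ x ∈ Finset.univ.filter fun i => t i = j, g (t x)
      = ∑ _x ∈ Finset.univ.filter fun i => t i = j, g j :=
        Finset.sum_congr rfl fun i hi => by rw [(Finset.mem_filter.mp hi).2]
    _ = _ := Finset.sum_const _

theorem stmt_19 (k : ℕ) (m : Fin k → ℕ) (hm : ∀ i, 0 < m i)
    (hsum : ∑ i, ((m i : ℚ) - 1) / (m i) ≤ 2) :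
    ∃ n ∈ ({1, 2, 3, 4, 6} : Set ℕ),
      ∑ i, ⌊((n : ℚ) + 1) * (((m i : ℚ) - 1) / (m i))⌋ ≤ 2 * (n : ℤ) := by
  set t : Fin k → ℕ := fun i => min (m i) 7 with htdef
  have ht8 : ∀ i, t i < 8 := fun i => lt_of_le_of_lt (min_le_right _ _) (by norm_num)
  set c : ℕ → ℕ := fun j => (Finset.univ.filter fun i => t i = j).card with hcdef
  -- hypothesis side
  have h1 : ∑ i, (((t i : ℕ) : ℚ) - 1) / ((t i : ℕ) : ℚ) ≤ 2 := by
    refine le_trans (Finset.sum_le_sum fun i _ => aux_mono (t i) (m i) ?_ (min_le_left _ _)) hsum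
    exact lt_min (hm i) (by norm_num)
  rw [aux_fiber t ht8 (fun j => ((j:ℚ) - 1) / (j:ℚ))] at h1
  simp only [Finset.sum_range_succ, Finset.sum_range_zero, nsmul_eq_mul] at h1
  have hkey : 210 * c 2 + 280 * c 3 + 315 * c 4 + 336 * c 5 + 350 * c 6 + 360 * c 7 ≤ 840 := by
    have h2 : (210 * c 2 + 280 * c 3 + 315 * c 4 + 336 * c 5 + 350 * c 6 + 360 * c 7 : ℚ)
        ≤ 840 := by
      norm_num at h1
      push_cast
      linarith
    exact_mod_cast h2
  -- get the complement index
  have hb2 : c 2 < 5 := by omega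
  have hb3 : c 3 < 4 := by omega
  have hb4 : c 4 < 3 := by omega
  have hb5 : c 5 < 3 := by omega
  have hb6 : c 6 < 3 := by omega
  have hb7 : c 7 < 3 := by omega
  have hL := aux_L ⟨c 2, hb2⟩ ⟨c 3, hb3⟩ ⟨c 4, hb4⟩ ⟨c 5, hb5⟩ ⟨c 6, hb6⟩ ⟨c 7, hb7⟩ hkey
  simp only at hL
  -- goal rewriting machinery
  have hgoal : ∀ n : ℕ, n + 1 ≤ 7 →
      ∑ i, ⌊((n : ℚ) + 1) * (((m i : ℚ) - 1) / (m i))⌋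
        = ∑ j ∈ Finset.range 8,
            c j • ⌊((n : ℚ) + 1) * (((j : ℕ) : ℚ) - 1) / ((j : ℕ) : ℚ)⌋ := by
    intro n hn
    rw [← aux_fiber t ht8 (fun j => ⌊((n : ℚ) + 1) * ((j : ℚ) - 1) / (j : ℚ)⌋)]
    exact Finset.sum_congr rfl fun i _ => aux_floor_min n (m i) hn (hm i)
  rcases hL with h | h | h | h | h
  · refine ⟨1, by norm_num, ?_⟩
    rw [hgoal 1 (by norm_num)]
    simp only [Finset.sum_range_succ, Finset.sum_range_zero, nsmul_eq_mul]
    norm_num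
    push_cast
    omega
  · refine ⟨2, by norm_num, ?_⟩
    rw [hgoal 2 (by norm_num)]
    simp only [Finset.sum_range_succ, Finset.sum_range_zero, nsmul_eq_mul]
    norm_num
    push_cast
    omega
  · refine ⟨3, by norm_num, ?_⟩
    rw [hgoal 3 (by norm_num)]
    simp only [Finset.sum_range_succ, Finset.sum_range_zero, nsmul_eq_mul]
    norm_num
    push_cast
    omega
  · refine ⟨4, by norm_num, ?_⟩
    rw [hgoal 4 (by norm_num)]
    simp only [Finset.sum_range_succ, Finset.sum_range_zero, nsmul_eq_mul]
    norm_num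
    push_cast
    omega
  · refine ⟨6, by norm_num, ?_⟩
    rw [hgoal 6 (by norm_num)]
    simp only [Finset.sum_range_succ, Finset.sum_range_zero, nsmul_eq_mul]
    norm_num
    push_cast
    omega
end
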